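/- Let n ≥ 2 be an integer, let l be a positive multiple of n, let ω ∈ ℂ be a primitive l-th root of unity, and let t be an integer with 0 ≤ t ≤ l−1. Consider the degree n polynomial p(z) = (z − ω^t − 1) · F_n(ω^t, z) in ℂ[z]. If t ≠ 0 and (l/n) divides t, then p has exactly n−1 distinct complex roots; otherwise p has exactly n distinct complex roots. -/

import Mathlib

/-!
Substituting `z = u + y / u` into the recursion gives
`F_n(y, u + y/u) · (u - y/u) = u^n - (y/u)^n`. For `y = δ² ≠ 0` and `ζ` a primitive `2n`-th root
of unity this exhibits `n - 1` distinct roots `δ (ζ^k + ζ^{-k})`, `0 < k < n`, of the monic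
polynomial `F_n(y, ·)` of degree `n - 1`, so `F_n(y, ·)` has exactly `n - 1` distinct roots.
Taking `u = y` shows that the root `y + 1` of the linear factor is a root of `F_n(y, ·)` exactly
when `y ≠ 1` and `y^n = 1`; for `y = ω^t` this means `t ≠ 0` and `l / n ∣ t`.
-/

open Polynomial

/-- The Dickson polynomials of the second kind: `dickF y z 1 = 1`, `dickF y z 2 = z`,
`dickF y z s = z * dickF y z (s-1) - y * dickF y z (s-2)` for `s ≥ 3`. -/
def dickF {R : Type*} [CommRing R] (y z : R) : ℕ → R
  | 0 => 0
  | 1 => 1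
  | (s + 2) => z * dickF y z (s + 1) - y * dickF y z s

theorem eq_or_eq_of_add_eq_add_of_mul_eq_mul {R : Type*} [CommRing R] [NoZeroDivisors R]
    {a b c d : R} (hs : a + b = c + d) (hp : a * b = c * d) : a = c ∨ a = d := by
  have : (a - c) * (a - d) = 0 := by linear_combination a * hs - hp
  simpa only [mul_eq_zero, sub_eq_zero] using this

theorem Polynomial.roots_toFinset_X_sub_C_mul {R : Type*} [CommRing R] [IsDomain R]
    [DecidableEq R] {p : R[X]} (hp : p ≠ 0) (a : R) :
    ((X - C a) * p).roots.toFinset = insert a p.roots.toFinset := by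
  rw [roots_mul (mul_ne_zero (X_sub_C_ne_zero a) hp), roots_X_sub_C, Multiset.toFinset_add,
    Multiset.toFinset_singleton, Finset.insert_eq]

theorem Polynomial.card_roots_toFinset_eq_of_injOn {R ι : Type*} [CommRing R] [IsDomain R]
    [DecidableEq R] {p : R[X]} (hp : p ≠ 0) {s : Finset ι} {f : ι → R} (hf : Set.InjOn f s)
    (hroot : ∀ i ∈ s, p.IsRoot (f i)) (hdeg : p.natDegree ≤ s.card) :
    p.roots.toFinset.card = s.card := by
  apply le_antisymm
  · calc p.roots.toFinset.card ≤ Multiset.card p.roots := Multiset.toFinset_card_le _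
      _ ≤ p.natDegree := card_roots' p
      _ ≤ s.card := hdeg
  · rw [← Finset.card_image_of_injOn hf]
    refine Finset.card_le_card (Finset.image_subset_iff.2 fun i hi => ?_)
    rw [Multiset.mem_toFinset, mem_roots hp]
    exact hroot i hi

section Dickson

variable {R : Type*} [CommRing R]

theorem map_dickF {S : Type*} [CommRing S] (f : R →+* S) (y z : R) (n : ℕ) :
    f (dickF y z n) = dickF (f y) (f z) n := by
  induction n using Nat.twoStepInduction with
  | zero | one => simp [dickF]
  | more s ih1 ih2 => simp [dickF, ih1, ih2]

theorem eval_dickF_C_X (y x : R) (n : ℕ) : (dickF (C y) X n).eval x = dickF y x n := by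
  simpa using map_dickF (evalRingHom x) (C y) X n

theorem dickF_mul_add_mul_sub (β γ : R) (n : ℕ) :
    dickF (β * γ) (β + γ) n * (β - γ) = β ^ n - γ ^ n := by
  induction n using Nat.twoStepInduction with
  | zero | one => simp [dickF]
  | more s ih1 ih2 =>
    rw [dickF]
    linear_combination (β + γ) * ih2 - (β * γ) * ih1

theorem dickF_one_two (n : ℕ) : dickF (1 : R) 2 n = n := by
  induction n using Nat.twoStepInduction with
  | zero | one => simp [dickF]
  | more s ih1 ih2 =>
    rw [dickF, ih1, ih2]
    push_cast
    ring

theorem dickF_C_X_monic_and_natDegree [Nontrivial R] (y : R) (s : ℕ) :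
    (dickF (C y) X (s + 1)).Monic ∧ (dickF (C y) X (s + 1)).natDegree = s := by
  induction s using Nat.twoStepInduction with
  | zero => simp [dickF]
  | one => simp [dickF]
  | more s ih1 ih2 =>
    obtain ⟨hm1, hd1⟩ := ih1
    obtain ⟨hm2, hd2⟩ := ih2
    have hdX : (X * dickF (C y) X (s + 2)).natDegree = s + 2 := by
      rw [monic_X.natDegree_mul hm2, natDegree_X, hd2, add_comm]
    have hlt : (C y * dickF (C y) X (s + 1)).natDegree < (X * dickF (C y) X (s + 2)).natDegree :=
      calc (C y * dickF (C y) X (s + 1)).natDegree ≤ (dickF (C y) X (s + 1)).natDegree :=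
            natDegree_C_mul_le _ _
        _ = s := hd1
        _ < (X * dickF (C y) X (s + 2)).natDegree := by omega
    rw [dickF]
    exact ⟨(monic_X.mul hm2).sub_of_left (degree_lt_degree hlt),
      by rw [natDegree_sub_eq_left_of_natDegree_lt hlt, hdX]⟩

theorem dickF_C_X_ne_zero [Nontrivial R] (y : R) {n : ℕ} (hn : n ≠ 0) : dickF (C y) X n ≠ 0 := by
  obtain ⟨s, rfl⟩ := Nat.exists_eq_succ_of_ne_zero hn
  exact (dickF_C_X_monic_and_natDegree y s).1.ne_zero

end Dickson

theorem isRoot_dickF_C_X_of_pow_eq_pow {R : Type*} [CommRing R] [IsDomain R] {β γ : R} {n : ℕ}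
    (h : β ^ n = γ ^ n) (hne : β ≠ γ) : (dickF (C (β * γ)) X n).IsRoot (β + γ) := by
  have key := dickF_mul_add_mul_sub β γ n
  rw [h, sub_self, mul_eq_zero] at key
  rw [IsRoot.def, eval_dickF_C_X]
  exact key.resolve_right (sub_ne_zero.2 hne)

theorem card_roots_toFinset_dickF {K : Type*} [Field K] [DecidableEq K] {n : ℕ} {ζ δ : K}
    (hζ : IsPrimitiveRoot ζ (2 * n)) (hδ : δ ≠ 0) :
    (dickF (C (δ ^ 2)) X n).roots.toFinset.card = n - 1 := by
  rcases Nat.eq_zero_or_pos n with rfl | hn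
  · simp [dickF]
  obtain ⟨hFm, hFd⟩ := dickF_C_X_monic_and_natDegree (δ ^ 2) (n - 1)
  rw [Nat.sub_add_cancel hn] at hFm hFd
  have hζ0 : ζ ≠ 0 := hζ.ne_zero (by omega)
  have hζn : ζ ^ n = -1 := by
    refine IsPrimitiveRoot.eq_neg_one_of_two_right ?_
    simpa [hn.ne'] using hζ.pow_of_dvd hn.ne' (dvd_mul_left n 2)
  have hζinv : ∀ a b, ζ ^ a = ζ⁻¹ ^ b → ζ ^ (a + b) = 1 := fun a b h => by
    rw [pow_add, h, ← mul_pow, inv_mul_cancel₀ hζ0, one_pow]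
  set β : ℕ → K := fun k => δ * ζ ^ k
  set γ : ℕ → K := fun k => δ * ζ⁻¹ ^ k
  have hβγ : ∀ k, β k * γ k = δ ^ 2 := fun k => by
    simp only [β, γ]
    rw [mul_mul_mul_comm, ← mul_pow, mul_inv_cancel₀ hζ0, one_pow, mul_one, sq]
  have hroot : ∀ k ∈ Finset.Icc 1 (n - 1), (dickF (C (δ ^ 2)) X n).IsRoot (β k + γ k) := by
    intro k hk
    rw [Finset.mem_Icc] at hk
    rw [← hβγ k]
    refine isRoot_dickF_C_X_of_pow_eq_pow ?_ fun h => ?_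
    · simp only [β, γ]
      rw [mul_pow, mul_pow, ← pow_mul, ← pow_mul, mul_comm k n, pow_mul, pow_mul, inv_pow ζ n, hζn,
        inv_neg, inv_one]
    · exact hζ.pow_ne_one_of_pos_of_lt (by omega) (by omega)
        (hζinv k k (mul_left_cancel₀ hδ h))
  have hinj : Set.InjOn (fun k => β k + γ k) (Finset.Icc 1 (n - 1)) := by
    intro k hk m hm h
    simp only [Finset.coe_Icc, Set.mem_Icc] at hk hm
    rcases eq_or_eq_of_add_eq_add_of_mul_eq_mul h ((hβγ k).trans (hβγ m).symm) with h | h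
    · exact hζ.pow_inj (by omega) (by omega) (mul_left_cancel₀ hδ h)
    · exact absurd (hζinv k m (mul_left_cancel₀ hδ h))
        (hζ.pow_ne_one_of_pos_of_lt (by omega) (by omega))
  have hcard : (Finset.Icc 1 (n - 1)).card = n - 1 := by
    rw [Nat.card_Icc, Nat.add_sub_cancel]
  rw [← hcard]
  exact card_roots_toFinset_eq_of_injOn hFm.ne_zero hinj hroot (hFd.trans hcard.symm).le

theorem dickF_C_X_isRoot_add_one_iff {K : Type*} [Field K] [CharZero K] {n : ℕ} (hn : n ≠ 0)
    (y : K) : (dickF (C y) X n).IsRoot (y + 1) ↔ y ≠ 1 ∧ y ^ n = 1 := by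
  rw [IsRoot.def, eval_dickF_C_X]
  by_cases hy : y = 1
  · simp [hy, one_add_one_eq_two, dickF_one_two, hn]
  · have key := dickF_mul_add_mul_sub y 1 n
    rw [mul_one, one_pow] at key
    rw [← mul_left_inj' (sub_ne_zero.2 hy), key, zero_mul, sub_eq_zero]
    exact (and_iff_right hy).symm

/-- The number of distinct complex roots of `(z - ω^t - 1) · F_n(ω^t, z)`. -/
theorem stmt9 (n l t : ℕ) (hn : 2 ≤ n) (hl : 0 < l) (hnl : n ∣ l) (ω : ℂ)
    (hω : IsPrimitiveRoot ω l) (ht : t ≤ l - 1) :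
    ((Polynomial.X - Polynomial.C (ω ^ t) - 1) *
        dickF (Polynomial.C (ω ^ t)) Polynomial.X n).roots.toFinset.card =
      if t ≠ 0 ∧ (l / n) ∣ t then n - 1 else n := by
  set y := ω ^ t with hy
  have htl : t < l := by omega
  have hF0 : dickF (C y) X n ≠ 0 := dickF_C_X_ne_zero y (by omega)
  obtain ⟨δ, hδ⟩ := IsAlgClosed.exists_pow_nat_eq y two_pos
  have hcard : (dickF (C y) X n).roots.toFinset.card = n - 1 := by
    have hy0 : δ ^ 2 ≠ 0 := hδ ▸ pow_ne_zero t (hω.ne_zero hl.ne')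
    rw [← hδ]
    exact card_roots_toFinset_dickF (Complex.isPrimitiveRoot_exp (2 * n) (by omega))
      (ne_zero_pow two_ne_zero hy0)
  have hmem : y + 1 ∈ (dickF (C y) X n).roots.toFinset ↔ t ≠ 0 ∧ l / n ∣ t := by
    have hy1 : y = 1 ↔ t = 0 :=
      ⟨fun h => Nat.eq_zero_of_dvd_of_lt ((hω.pow_eq_one_iff_dvd t).1 h) htl,
        fun h => by rw [hy, h, pow_zero]⟩
    rw [Multiset.mem_toFinset, mem_roots hF0, dickF_C_X_isRoot_add_one_iff (by omega), ne_eq,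
      hy1, hy, ← pow_mul, hω.pow_eq_one_iff_dvd, Nat.div_dvd_iff_dvd_mul hnl (by omega), mul_comm]
  rw [sub_sub, ← C_1, ← C_add, roots_toFinset_X_sub_C_mul hF0, Finset.card_insert_eq_ite, hcard,
    if_congr hmem rfl rfl]
  split_ifs <;> omega
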